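/- arXiv:1507.05003 — 4 statements merged into one kernel-verified Lean document; each statement's English description precedes it below -/
import Mathlib

section
/- There exist constants C > 0 and δ > 0 such that for all w ∈ ℂ with 0 < |w - 1| < δ and 1 - 3w + 3w² ≠ 0, one has |G(w) + 1/9 - (1/3)·Re(-((1-w)/w)³)| ≤ C·|w - 1|⁴, where G(w) = (1/3)·log|w³/(1 - 3w + 3w²)| - 1/9. -/
/-! Write `u = w - 1` and `d = 1 - 3w + 3w²`. Since `w³ = d + u³`, we get `w³/d = 1 + z` with
`z = u³/d = O(|u|³)`, and `log ‖1 + z‖ = Re z + O(|z|²)`. On the other hand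
`-((1 - w)/w)³ = u³/w³` differs from `z` by `u⁶/(d w³)`. Both errors are `O(|u|⁶)`. -/

open Complex in
lemma abs_log_norm_one_add_sub_re_le {z : ℂ} (hz : ‖z‖ ≤ 1 / 2) :
    |Real.log ‖1 + z‖ - z.re| ≤ ‖z‖ ^ 2 := by
  have hlog := norm_log_one_add_sub_self_le (hz.trans_lt (by norm_num))
  have hinv : (1 - ‖z‖)⁻¹ ≤ 2 := by
    rw [inv_le_comm₀ (by linarith) (by norm_num)]
    linarith
  calc |Real.log ‖1 + z‖ - z.re| = |(log (1 + z) - z).re| := by rw [sub_re, log_re]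
    _ ≤ ‖log (1 + z) - z‖ := abs_re_le_norm _
    _ ≤ ‖z‖ ^ 2 * (1 - ‖z‖)⁻¹ / 2 := hlog
    _ ≤ ‖z‖ ^ 2 := by nlinarith [sq_nonneg ‖z‖]

lemma half_le_norm_of_norm_sub_one_le {R : Type*} [SeminormedRing R] [NormOneClass R] {x : R}
    (hx : ‖x - 1‖ ≤ 1 / 2) : 1 / 2 ≤ ‖x‖ := by
  have := norm_sub_norm_le (1 : R) (1 - x)
  rw [norm_sub_rev, sub_sub_cancel, norm_one] at this
  linarith

lemma half_le_norm_one_sub_three_mul_add {w : ℂ} (hw : ‖w - 1‖ ≤ 1 / 10) :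
    1 / 2 ≤ ‖1 - 3 * w + 3 * w ^ 2‖ := by
  apply half_le_norm_of_norm_sub_one_le
  have hsplit : 1 - 3 * w + 3 * w ^ 2 - 1 = 3 * (w - 1) + 3 * (w - 1) ^ 2 := by ring
  calc ‖1 - 3 * w + 3 * w ^ 2 - 1‖ ≤ 3 * ‖w - 1‖ + 3 * ‖w - 1‖ ^ 2 := by
        rw [hsplit]
        refine (norm_add_le _ _).trans_eq ?_
        simp only [norm_mul, norm_pow, RCLike.norm_ofNat]
    _ ≤ 1 / 2 := by nlinarith [norm_nonneg (w - 1)]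

lemma cube_div_eq_one_add {K : Type*} [Field K] {w : K} (hd : 1 - 3 * w + 3 * w ^ 2 ≠ 0) :
    w ^ 3 / (1 - 3 * w + 3 * w ^ 2) = 1 + (w - 1) ^ 3 / (1 - 3 * w + 3 * w ^ 2) := by
  rw [one_add_div hd]
  ring

lemma div_sub_neg_cube_eq {K : Type*} [Field K] {w : K} (hw : w ≠ 0)
    (hd : 1 - 3 * w + 3 * w ^ 2 ≠ 0) :
    (w - 1) ^ 3 / (1 - 3 * w + 3 * w ^ 2) - -((1 - w) / w) ^ 3
      = (w - 1) ^ 6 / ((1 - 3 * w + 3 * w ^ 2) * w ^ 3) := by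
  rw [sub_neg_eq_add, div_pow, div_add_div _ _ hd (pow_ne_zero 3 hw)]
  ring

lemma abs_third_log_norm_cube_div_sub_re_le {w : ℂ} (hw : ‖w - 1‖ ≤ 1 / 10)
    (hd : 1 - 3 * w + 3 * w ^ 2 ≠ 0) :
    |(1 / 3) * Real.log ‖w ^ 3 / (1 - 3 * w + 3 * w ^ 2)‖ - (1 / 3) * (-((1 - w) / w) ^ 3).re|
      ≤ 7 * ‖w - 1‖ ^ 6 := by
  set d := 1 - 3 * w + 3 * w ^ 2
  set a := ‖w - 1‖
  have ha : 0 ≤ a := norm_nonneg _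
  have hw_norm : 1 / 2 ≤ ‖w‖ := half_le_norm_of_norm_sub_one_le (by linarith)
  have hw0 : w ≠ 0 := norm_pos_iff.mp (by linarith)
  have hd_norm : 1 / 2 ≤ ‖d‖ := half_le_norm_one_sub_three_mul_add hw
  set z := (w - 1) ^ 3 / d
  have hz : ‖z‖ ≤ 2 * a ^ 3 := by
    rw [norm_div, norm_pow, div_le_iff₀ (by linarith)]
    nlinarith [pow_nonneg ha 3]
  have hz_half : ‖z‖ ≤ 1 / 2 := hz.trans (by nlinarith [pow_le_pow_left₀ ha hw 3])
  have hrem : ‖(w - 1) ^ 6 / (d * w ^ 3)‖ ≤ 16 * a ^ 6 := by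
    have hw3 : (1 / 2) ^ 3 ≤ ‖w‖ ^ 3 := pow_le_pow_left₀ (by norm_num) hw_norm 3
    rw [norm_div, norm_mul, norm_pow, norm_pow, div_le_iff₀ (by positivity)]
    nlinarith [pow_nonneg ha 6, mul_le_mul hd_norm hw3 (by norm_num) (by linarith)]
  calc _ = |(1 / 3) * (Real.log ‖1 + z‖ - z.re) + (1 / 3) * ((w - 1) ^ 6 / (d * w ^ 3)).re| := by
        rw [cube_div_eq_one_add hd, ← div_sub_neg_cube_eq hw0 hd, Complex.sub_re]
        congr 1
        ring
    _ ≤ (1 / 3) * ‖z‖ ^ 2 + (1 / 3) * ‖(w - 1) ^ 6 / (d * w ^ 3)‖ := by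
        refine (abs_add_le _ _).trans (add_le_add ?_ ?_) <;>
          rw [abs_mul, abs_of_pos (by norm_num : (0 : ℝ) < 1 / 3)] <;> gcongr
        · exact abs_log_norm_one_add_sub_re_le hz_half
        · exact Complex.abs_re_le_norm _
    _ ≤ 7 * a ^ 6 := by nlinarith [pow_le_pow_left₀ (norm_nonneg z) hz 2]

/-- |G(w) + 1/9 - (1/3)·Re(-((1-w)/w)³)| ≤ C·|w - 1|⁴ near w = 1. -/
theorem stmt_5 :
    ∃ C > (0:ℝ), ∃ δ > (0:ℝ), ∀ w : ℂ,
      0 < ‖w - 1‖ → ‖w - 1‖ < δ →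
      1 - 3*w + 3*w^2 ≠ 0 →
      |((1/3) * Real.log ‖w^3 / (1 - 3*w + 3*w^2)‖ - 1/9) + 1/9
          - (1/3) * (-(((1 - w)/w)^3)).re|
        ≤ C * ‖w - 1‖^4 := by
  refine ⟨7, by norm_num, 1 / 10, by norm_num, fun w _ hw hd => ?_⟩
  calc _ = |(1 / 3) * Real.log ‖w ^ 3 / (1 - 3 * w + 3 * w ^ 2)‖
          - (1 / 3) * (-((1 - w) / w) ^ 3).re| := by ring_nf
    _ ≤ 7 * ‖w - 1‖ ^ 6 := abs_third_log_norm_cube_div_sub_re_le hw.le hd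
    _ ≤ 7 * ‖w - 1‖ ^ 4 := by
        gcongr 7 * ?_
        exact pow_le_pow_of_le_one (norm_nonneg _) (by linarith) (by norm_num)
end

section
/- There exist constants C > 0 and δ > 0 such that for all w ∈ ℂ with |w - 1| < δ, |G(w) + 1/9| ≤ C·|w - 1|³, where G(w) = (1/3)·log|w³/(1 - 3w + 3w²)| - 1/9. In other words, G(w) - G(1) = O(|w-1|³) near w = 1. -/
/-!
Since `w³ - (1 - 3w + 3w²) = (w - 1)³`, the argument of the logarithm is `1 + (w - 1)³ / D(w)`
with `D(w) = 1 - 3w + 3w²` close to `D(1) = 1`, and `log ‖1 + z‖ = Re (log (1 + z)) = O(‖z‖)`.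
-/

open Complex

lemma Complex.abs_log_norm_one_add_le {z : ℂ} (hz : ‖z‖ ≤ 1 / 2) :
    |Real.log ‖1 + z‖| ≤ 3 / 2 * ‖z‖ := by
  rw [← log_re]
  exact (abs_re_le_norm _).trans (norm_log_one_add_half_le_self hz)

lemma cube_div_eq_one_add_sub_one_pow_three_div {K : Type*} [Field K] {w : K}
    (hw : 1 - 3 * w + 3 * w ^ 2 ≠ 0) :
    w ^ 3 / (1 - 3 * w + 3 * w ^ 2) = 1 + (w - 1) ^ 3 / (1 - 3 * w + 3 * w ^ 2) := by
  rw [one_add_div hw]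
  ring

lemma half_le_norm_one_sub_three_mul_add_three_mul_sq {w : ℂ} (hw : ‖w - 1‖ ≤ 1 / 8) :
    1 / 2 ≤ ‖1 - 3 * w + 3 * w ^ 2‖ := by
  have hexpand : 1 - 3 * w + 3 * w ^ 2 = 1 - (-3 * (w - 1) - 3 * (w - 1) ^ 2) := by ring
  have hsmall : ‖-3 * (w - 1) - 3 * (w - 1) ^ 2‖ ≤ 1 / 2 :=
    calc ‖-3 * (w - 1) - 3 * (w - 1) ^ 2‖ ≤ 3 * ‖w - 1‖ + 3 * ‖w - 1‖ ^ 2 := by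
          refine (norm_sub_le _ _).trans_eq ?_
          simp [norm_pow]
      _ ≤ 3 * (1 / 8) + 3 * (1 / 8) ^ 2 := by gcongr
      _ ≤ 1 / 2 := by norm_num
  rw [hexpand]
  linarith [norm_sub_norm_le (1 : ℂ) (-3 * (w - 1) - 3 * (w - 1) ^ 2), norm_one (α := ℂ)]

/-- |G(w) + 1/9| ≤ C·|w - 1|³ near w = 1, i.e. G(w) - G(1) = O(|w-1|³). -/
theorem stmt_6 :
    ∃ C > (0:ℝ), ∃ δ > (0:ℝ), ∀ w : ℂ, ‖w - 1‖ < δ →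
      |((1/3) * Real.log (‖w^3 / (1 - 3*w + 3*w^2)‖) - 1/9) + 1/9|
        ≤ C * ‖w - 1‖^3 := by
  refine ⟨1, one_pos, 1 / 8, by norm_num, fun w hw => ?_⟩
  have hD := half_le_norm_one_sub_three_mul_add_three_mul_sq hw.le
  have hD0 : 1 - 3 * w + 3 * w ^ 2 ≠ 0 := norm_pos_iff.mp (by linarith)
  set z := (w - 1) ^ 3 / (1 - 3 * w + 3 * w ^ 2) with hz_def
  have hz : ‖z‖ ≤ 2 * ‖w - 1‖ ^ 3 := by
    rw [hz_def, norm_div, norm_pow, div_le_iff₀ (by linarith)]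
    nlinarith [pow_nonneg (norm_nonneg (w - 1)) 3]
  have hz_half : ‖z‖ ≤ 1 / 2 :=
    calc ‖z‖ ≤ 2 * ‖w - 1‖ ^ 3 := hz
      _ ≤ 2 * (1 / 8) ^ 3 := by gcongr
      _ ≤ 1 / 2 := by norm_num
  rw [cube_div_eq_one_add_sub_one_pow_three_div hD0, sub_add_cancel, abs_mul,
    abs_of_pos (by norm_num : (0 : ℝ) < 1 / 3)]
  linarith [Complex.abs_log_norm_one_add_le hz_half]
end

section
/- The gradient of G vanishes at w = 1: writing G(w) = (1/3)·log|w³/(1 - 3w + 3w²)| - 1/9, both first-order partial derivatives of G (as a function of the real coordinates of w) vanish at w = 1, and moreover all second-order partial derivatives of G vanish at w = 1. -/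
/-!
Since `Real.log ‖z‖ = Re (log z)`, `G` is the real part of the holomorphic function
`Gc w = log (w³ / (1 - 3w + 3w²)) / 3 - 1/9` near `w = 1`. For a real-linear `L`, the real
derivative of `Re ∘ H ∘ L` at `p` is `q ↦ Re (H' (L p) * L q)`, so it vanishes where `H'`
does, and its own derivative vanishes where `H''` does. Here
`Gc' w = 1/w - (2w - 1)/(1 - 3w + 3w²)` has a double zero at `w = 1`.
-/

/-- G as a function of the real coordinates (x, y) of w = x + iy. -/
noncomputable def Gr : ℝ × ℝ → ℝ := fun p =>
  (1/3) * Real.log (‖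
    ((p.1 + p.2 * Complex.I)^3 /
      (1 - 3*(p.1 + p.2 * Complex.I) + 3*(p.1 + p.2 * Complex.I)^2))‖) - 1/9

open Complex Filter Topology

section ReComp

variable {E : Type*} [NormedAddCommGroup E] [NormedSpace ℝ E]

noncomputable def reMulCLM (L : E →L[ℝ] ℂ) : ℂ →L[ℝ] E →L[ℝ] ℝ :=
  reCLM.smulRight (reCLM ∘L L) - imCLM.smulRight (imCLM ∘L L)

@[simp]
theorem reMulCLM_apply (L : E →L[ℝ] ℂ) (c : ℂ) (q : E) : reMulCLM L c q = (c * L q).re := by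
  simp [reMulCLM]

theorem HasDerivAt.hasFDerivAt_re_comp {H : ℂ → ℂ} {c : ℂ} {L : E →L[ℝ] ℂ} {p : E}
    (h : HasDerivAt H c (L p)) : HasFDerivAt (fun p => (H (L p)).re) (reMulCLM L c) p := by
  refine (reCLM.hasFDerivAt.comp p
    ((h.hasFDerivAt.restrictScalars ℝ).comp p L.hasFDerivAt)).congr_fderiv ?_
  ext q
  simp [mul_comm]

theorem fderiv_re_comp_eq_zero {H : ℂ → ℂ} {L : E →L[ℝ] ℂ} {p : E}
    (h : HasDerivAt H 0 (L p)) : fderiv ℝ (fun p => (H (L p)).re) p = 0 := by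
  simpa using h.hasFDerivAt_re_comp.fderiv

theorem fderiv_fderiv_re_comp_eq_zero {H H' : ℂ → ℂ} {L : E →L[ℝ] ℂ} {p : E}
    (hH : ∀ᶠ w in 𝓝 (L p), HasDerivAt H (H' w) w) (hH' : HasDerivAt H' 0 (L p)) :
    fderiv ℝ (fderiv ℝ fun p => (H (L p)).re) p = 0 := by
  have hfd : fderiv ℝ (fun p => (H (L p)).re) =ᶠ[𝓝 p] fun p => reMulCLM L (H' (L p)) :=
    (L.continuous.continuousAt.eventually hH).mono fun q hq => hq.hasFDerivAt_re_comp.fderiv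
  rw [hfd.fderiv_eq]
  simpa [Function.comp_def] using ((reMulCLM L).hasFDerivAt.comp p
    ((hH'.hasFDerivAt.restrictScalars ℝ).comp p L.hasFDerivAt)).fderiv

end ReComp

noncomputable def Gc (w : ℂ) : ℂ := log (w ^ 3 / (1 - 3 * w + 3 * w ^ 2)) / 3 - 1 / 9

noncomputable def dGc (w : ℂ) : ℂ := w⁻¹ - (2 * w - 1) / (1 - 3 * w + 3 * w ^ 2)

theorem Gr_eq_re_Gc :
    Gr = fun p => (Gc ((equivRealProdCLM.symm : ℝ × ℝ →L[ℝ] ℂ) p)).re := by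
  ext p
  simp [Gr, Gc, equivRealProdCLM_symm_apply, log_re]
  ring

theorem hasDerivAt_denom (w : ℂ) :
    HasDerivAt (fun w : ℂ => 1 - 3 * w + 3 * w ^ 2) (6 * w - 3) w :=
  ((((hasDerivAt_id' w).const_mul 3).const_sub 1).add
    ((hasDerivAt_pow 2 w).const_mul 3)).congr_deriv (by ring)

theorem hasDerivAt_Gc {w : ℂ} (hw : w ≠ 0) (hq : 1 - 3 * w + 3 * w ^ 2 ≠ 0)
    (hslit : w ^ 3 / (1 - 3 * w + 3 * w ^ 2) ∈ slitPlane) : HasDerivAt Gc (dGc w) w := by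
  refine ((((hasDerivAt_pow 3 w).div (hasDerivAt_denom w) hq).clog hslit).div_const 3
    |>.sub_const (1 / 9)).congr_deriv ?_
  simp only [dGc, Pi.div_apply]
  field_simp
  ring

theorem eventually_hasDerivAt_Gc : ∀ᶠ w in 𝓝 (1 : ℂ), HasDerivAt Gc (dGc w) w := by
  have hq : ContinuousAt (fun w : ℂ => 1 - 3 * w + 3 * w ^ 2) 1 := by fun_prop
  have hq1 : ∀ᶠ w in 𝓝 (1 : ℂ), 1 - 3 * w + 3 * w ^ 2 ≠ 0 := hq.eventually_ne (by norm_num)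
  have hf : ContinuousAt (fun w : ℂ => w ^ 3 / (1 - 3 * w + 3 * w ^ 2)) 1 :=
    (continuousAt_id.pow 3).div hq (by norm_num)
  have hslit : ∀ᶠ w in 𝓝 (1 : ℂ), w ^ 3 / (1 - 3 * w + 3 * w ^ 2) ∈ slitPlane :=
    hf.eventually_mem (isOpen_slitPlane.mem_nhds (by norm_num))
  filter_upwards [eventually_ne_nhds one_ne_zero, hq1, hslit] with w hw hqw hslitw
  exact hasDerivAt_Gc hw hqw hslitw

theorem hasDerivAt_dGc_one : HasDerivAt dGc 0 1 :=
  ((hasDerivAt_inv one_ne_zero).sub ((((hasDerivAt_id' (1 : ℂ)).const_mul 2).sub_const 1).div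
    (hasDerivAt_denom 1) (by norm_num))).congr_deriv (by norm_num)

theorem dGc_one : dGc 1 = 0 := by norm_num [dGc]

/-- all first- and second-order partial derivatives of G vanish at w = 1. -/
theorem stmt_7 :
    fderiv ℝ Gr (1, 0) = 0 ∧ fderiv ℝ (fderiv ℝ Gr) (1, 0) = 0 := by
  have h10 : (equivRealProdCLM.symm : ℝ × ℝ →L[ℝ] ℂ) (1, 0) = 1 := by
    simp [equivRealProdCLM_symm_apply]
  rw [Gr_eq_re_Gc]
  refine ⟨fderiv_re_comp_eq_zero ?_, fderiv_fderiv_re_comp_eq_zero (H' := dGc) ?_ ?_⟩ <;> rw [h10]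
  · exact dGc_one ▸ eventually_hasDerivAt_Gc.self_of_nhds
  · exact eventually_hasDerivAt_Gc
  · exact hasDerivAt_dGc_one
end

section
/- There exists ε₀ > 0 such that for all 0 < ε < ε₀ and all w in the sector S_ε = {w = 1 + r·e^{iθ} : 0 < r < ε^{1/3}/2, 11π/12 < θ < 13π/12}, one has -ε < G(w) - G(1) < 0, where G(w) = (1/3)·log|w³/(1 - 3w + 3w²)| - 1/9 and G(1) = -1/9. -/
/-!
With `w = 1 + z` one has `w³ = D + z³` where `D = 1 - 3w + 3w² = 1 + 3z + 3z²`, so the ratio in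
`G` is `1 + z³ / D` with `D ≈ 1`. On the sector `3θ` lies within `π/4` of `3π`, so
`Re (z³ D̄) ≈ |z|³ cos 3θ ≤ -|z|³/2` dominates `|z|⁶` and `|D + z³| < |D|`; on the other side
`|z³ / D| ≤ 2|z|³ < ε/4`, which costs less than `ε` after taking `(1/3) log`.
-/

open Real Complex ComplexConjugate

lemma Real.cos_three_mul_le_neg_half {θ : ℝ} (hθ : |θ - π| ≤ π / 9) :
    Real.cos (3 * θ) ≤ -1 / 2 := by
  have hcos : Real.cos (3 * θ) = -Real.cos |3 * (θ - π)| := by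
    rw [Real.cos_abs, show 3 * θ = 3 * (θ - π) + π + 2 * π by ring, Real.cos_add_two_pi,
      Real.cos_add_pi]
  have habs : |3 * (θ - π)| ≤ π / 3 := by
    rw [abs_mul, abs_of_pos three_pos]; linarith
  have hhalf := Real.cos_le_cos_of_nonneg_of_le_pi (abs_nonneg _) (by linarith [pi_pos]) habs
  rw [Real.cos_pi_div_three] at hhalf
  linarith

lemma re_ofReal_mul_exp_pow_three (r θ : ℝ) :
    (((r : ℂ) * exp (θ * I)) ^ 3).re = r ^ 3 * Real.cos (3 * θ) := by
  have h : ((r : ℂ) * exp (θ * I)) ^ 3 = ((r ^ 3 : ℝ) : ℂ) * exp ((3 * θ : ℝ) * I) := by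
    rw [mul_pow, ← Complex.exp_nat_mul]; push_cast; ring_nf
  rw [h, re_ofReal_mul, exp_ofReal_mul_I_re]

lemma pow_three_lt_of_lt_rpow_one_third {r ε : ℝ} (hr : 0 ≤ r) (hε : 0 < ε)
    (hrε : r < ε ^ ((1 : ℝ) / 3) / 2) : 8 * r ^ 3 < ε := by
  have hcube : (ε ^ ((1 : ℝ) / 3)) ^ 3 = ε := by
    rw [← Real.rpow_natCast, ← Real.rpow_mul hε.le]; norm_num
  calc 8 * r ^ 3 = (2 * r) ^ 3 := by ring
    _ < (ε ^ ((1 : ℝ) / 3)) ^ 3 := by gcongr; linarith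
    _ = ε := hcube

lemma Real.neg_two_mul_lt_log {x a : ℝ} (hx : 0 ≤ x) (hx2 : x ≤ 1 / 2) (ha : 1 - x < a) :
    -(2 * x) < Real.log a := by
  have ha0 : 0 < a := by linarith
  have hinv : 1 - a⁻¹ > -(2 * x) := by
    rw [gt_iff_lt, ← sub_pos, show 1 - a⁻¹ - -(2 * x) = (a * (1 + 2 * x) - 1) / a by
      field_simp; ring]
    apply div_pos _ ha0
    nlinarith
  linarith [Real.one_sub_inv_le_log_of_pos ha0]

lemma one_add_pow_three_eq (z : ℂ) :
    (1 + z) ^ 3 = (1 - 3 * (1 + z) + 3 * (1 + z) ^ 2) + z ^ 3 := by ring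

lemma re_pow_three_mul_conj_le (z : ℂ) :
    (z ^ 3 * conj (1 - 3 * (1 + z) + 3 * (1 + z) ^ 2)).re
      ≤ (z ^ 3).re + 3 * ‖z‖ ^ 4 + 3 * ‖z‖ ^ 5 := by
  have hc : z * conj z = ((‖z‖ ^ 2 : ℝ) : ℂ) := by rw [mul_conj, normSq_eq_norm_sq]
  have hexp : z ^ 3 * conj (1 - 3 * (1 + z) + 3 * (1 + z) ^ 2)
      = z ^ 3 + ((3 * ‖z‖ ^ 2 : ℝ) : ℂ) * z ^ 2 + ((3 * ‖z‖ ^ 4 : ℝ) : ℂ) * z := by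
    simp only [map_add, map_sub, map_mul, map_pow, map_one, map_ofNat]
    push_cast at hc ⊢
    linear_combination (3 * z ^ 2 + 3 * z * (z * conj z + (‖z‖ : ℂ) ^ 2)) * hc
  have h1 := re_le_norm z
  have h2 : (z ^ 2).re ≤ ‖z‖ ^ 2 := (re_le_norm _).trans_eq (norm_pow z 2)
  have hn := norm_nonneg z
  rw [hexp, add_re, add_re, re_ofReal_mul, re_ofReal_mul]
  nlinarith [pow_nonneg hn 2, pow_nonneg hn 4]

section
variable {z : ℂ}

lemma norm_cube_div_lt_one (hz0 : z ≠ 0) (hz : ‖z‖ ≤ 1 / 20) (hre : (z ^ 3).re ≤ -‖z‖ ^ 3 / 2) :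
    ‖(1 + z) ^ 3 / (1 - 3 * (1 + z) + 3 * (1 + z) ^ 2)‖ < 1 := by
  set D := 1 - 3 * (1 + z) + 3 * (1 + z) ^ 2
  have hpos : 0 < ‖z‖ := norm_pos_iff.2 hz0
  have hsmall : ‖z‖ ^ 3 * (‖z‖ ^ 3 + 6 * ‖z‖ ^ 2 + 6 * ‖z‖ - 1) < 0 :=
    mul_neg_of_pos_of_neg (by positivity) (by nlinarith)
  have hnormSq : normSq ((1 + z) ^ 3) < normSq D := by
    rw [one_add_pow_three_eq, add_comm D, normSq_add, normSq_eq_norm_sq (z ^ 3), norm_pow]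
    nlinarith [re_pow_three_mul_conj_le z]
  have hnorm : ‖(1 + z) ^ 3‖ < ‖D‖ := by
    rw [normSq_eq_norm_sq, normSq_eq_norm_sq] at hnormSq
    exact lt_of_pow_lt_pow_left₀ 2 (norm_nonneg _) hnormSq
  rw [norm_div, div_lt_one ((norm_nonneg _).trans_lt hnorm)]
  exact hnorm

lemma one_sub_two_mul_norm_pow_three_le_norm_cube_div (hz : ‖z‖ ≤ 1 / 20) :
    1 - 2 * ‖z‖ ^ 3 ≤ ‖(1 + z) ^ 3 / (1 - 3 * (1 + z) + 3 * (1 + z) ^ 2)‖ := by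
  set D := 1 - 3 * (1 + z) + 3 * (1 + z) ^ 2 with hD_def
  have hn := norm_nonneg z
  have hperturb : ‖1 - D‖ ≤ 3 * ‖z‖ + 3 * ‖z‖ ^ 2 := by
    calc ‖1 - D‖ = ‖-(3 * z) - 3 * z ^ 2‖ := by rw [hD_def]; ring_nf
      _ ≤ ‖-(3 * z)‖ + ‖3 * z ^ 2‖ := norm_sub_le _ _
      _ = 3 * ‖z‖ + 3 * ‖z‖ ^ 2 := by simp
  have hD : 1 / 2 ≤ ‖D‖ := by
    have h := norm_sub_norm_le (1 : ℂ) (1 - D)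
    rw [sub_sub_cancel, norm_one] at h
    nlinarith
  have hD0 : D ≠ 0 := norm_pos_iff.1 (by linarith)
  have hu : ‖z ^ 3 / D‖ ≤ 2 * ‖z‖ ^ 3 := by
    rw [norm_div, norm_pow, div_le_iff₀ (by linarith)]
    nlinarith [pow_nonneg hn 3]
  have hratio : (1 + z) ^ 3 / D = 1 + z ^ 3 / D := by
    rw [one_add_pow_three_eq, add_div, div_self hD0]
  have h := norm_sub_le_norm_add (1 : ℂ) (z ^ 3 / D)
  rw [norm_one] at h
  rw [hratio]
  linarith

end

open Real in
/-- there is ε₀ > 0 such that for 0 < ε < ε₀, every point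
    w = 1 + r·e^{iθ} of the sector S_ε (0 < r < ε^{1/3}/2, 11π/12 < θ < 13π/12)
    satisfies -ε < G(w) - G(1) < 0. -/
theorem stmt_10 :
    ∃ ε₀ > (0:ℝ), ∀ ε : ℝ, 0 < ε → ε < ε₀ →
      ∀ r θ : ℝ, 0 < r → r < ε ^ ((1:ℝ)/3) / 2 →
        11*π/12 < θ → θ < 13*π/12 →
        -ε < ((1/3) * Real.log (‖
              ((1 + r * Complex.exp (θ * Complex.I))^3 /
                (1 - 3*(1 + r * Complex.exp (θ * Complex.I))
                  + 3*(1 + r * Complex.exp (θ * Complex.I))^2))‖) - 1/9)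
            - (-1/9) ∧
          ((1/3) * Real.log (‖
              ((1 + r * Complex.exp (θ * Complex.I))^3 /
                (1 - 3*(1 + r * Complex.exp (θ * Complex.I))
                  + 3*(1 + r * Complex.exp (θ * Complex.I))^2))‖) - 1/9)
            - (-1/9) < 0 := by
  refine ⟨1 / 1000, by norm_num, fun ε hε hε₀ r θ hr hrε hθ₁ hθ₂ => ?_⟩
  set z : ℂ := r * Complex.exp (θ * Complex.I)
  have hnorm : ‖z‖ = r := by simp [z, abs_of_pos hr]
  have hr3 : 8 * r ^ 3 < ε := pow_three_lt_of_lt_rpow_one_third hr.le hε hrε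
  have hz : ‖z‖ ≤ 1 / 20 :=
    hnorm ▸ le_of_pow_le_pow_left₀ three_ne_zero (by norm_num) (by linarith)
  have hcos : Real.cos (3 * θ) ≤ -1 / 2 :=
    Real.cos_three_mul_le_neg_half (abs_le.2 ⟨by linarith, by linarith⟩)
  have hre : (z ^ 3).re ≤ -‖z‖ ^ 3 / 2 := by
    rw [re_ofReal_mul_exp_pow_three, hnorm]
    nlinarith [pow_pos hr 3]
  have hlt := norm_cube_div_lt_one (norm_pos_iff.1 (hnorm ▸ hr)) hz hre
  have hgt := one_sub_two_mul_norm_pow_three_le_norm_cube_div hz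
  rw [hnorm] at hgt
  set A := ‖(1 + z) ^ 3 / (1 - 3 * (1 + z) + 3 * (1 + z) ^ 2)‖
  have hlog_neg : Real.log A < 0 := Real.log_neg (by linarith) hlt
  have hlog_gt : -(2 * (ε / 4)) < Real.log A :=
    Real.neg_two_mul_lt_log (by linarith) (by linarith) (by linarith)
  constructor <;> linarith
end
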